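/- arXiv:0802.0612 — 6 statements merged into one kernel-verified Lean document; each statement's English description precedes it below -/
import Mathlib

section
/- Let Q ⊂ ℝ^n be a full-dimensional simplicial convex polytope with 0 in its interior, equipped with a weight function a : V(Q) → ℝ_{>0}. If u ∈ V(Q) and v ∈ V(Q*) satisfy u ∉ F_v and a(u)(1+⟨v,u⟩) = ε_Q (i.e. the pair (u,v) realizes the minimum defining ε_Q), then u is adjacent to F_v: there exists a facet F of Q containing u such that F ∩ F_v is a face of Q of dimension n−2. -/
open Matrix

/-- The polar dual `Q* = {v | ⟨v,u⟩ ≥ -1 for all u ∈ Q}`. -/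
def polarDual {n : ℕ} (Q : Set (Fin n → ℝ)) : Set (Fin n → ℝ) :=
  {v | ∀ u ∈ Q, -1 ≤ v ⬝ᵥ u}

/-- The facet `F_v = {u ∈ Q | ⟨v,u⟩ = -1}` of `Q` corresponding to a vertex `v` of `Q*`. -/
def facetOf {n : ℕ} (Q : Set (Fin n → ℝ)) (v : Fin n → ℝ) : Set (Fin n → ℝ) :=
  {u ∈ Q | v ⬝ᵥ u = -1}

/-- The set of numbers `a(u)(1 + ⟨v,u⟩)` for `u ∈ V(Q)`, `v ∈ V(Q*)`, `u ∉ F_v`;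
`ε_Q` is its minimum. -/
def epsSet {n : ℕ} (VQ VQd : Finset (Fin n → ℝ)) (a : (Fin n → ℝ) → ℝ) : Set ℝ :=
  {x | ∃ u ∈ VQ, ∃ v ∈ VQd, v ⬝ᵥ u ≠ -1 ∧ x = a u * (1 + v ⬝ᵥ u)}

/-!
The `n` vertices of the simplex facet `F_v` are the rows of a square matrix `M`, which is
invertible because `v` is a vertex of `Q*`. A supporting hyperplane `z` of `Q` at the vertex `u`
has `M (z - v) ≥ 0` but `⟨u, z - v⟩ < 0`, so some column `d` of `M⁻¹`, say the `i`-th one, has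
`⟨d, u⟩ < 0`. The ray `v + μ d` stays on the hyperplanes dual to the vertices of `F_v` other than
the `i`-th, so it runs along an edge of `Q*`; its far endpoint `w` is a vertex of `Q*` with
`⟨w, u⟩ < ⟨v, u⟩`, and minimality of `ε_Q` forces `⟨w, u⟩ = -1`, i.e. `u ∈ F_w`. Finally
`F_w ∩ F_v` is the convex hull of the `n - 1` affinely independent vertices of `F_v` other than
the `i`-th one, so it has dimension `n - 2`.
-/

open Set Filter Topology

theorem isLinearMap_dotProduct {ι : Type*} [Fintype ι] (y : ι → ℝ) : IsLinearMap ℝ (y ⬝ᵥ ·) :=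
  ⟨dotProduct_add y, fun c x => dotProduct_smul c y x⟩

theorem dotProduct_eq_of_mem_openSegment {ι : Type*} [Fintype ι] {x₁ x₂ w y : ι → ℝ} {c : ℝ}
    (hw : w ∈ openSegment ℝ x₁ x₂) (h₁ : c ≤ y ⬝ᵥ x₁) (h₂ : c ≤ y ⬝ᵥ x₂) (h : y ⬝ᵥ w = c) :
    y ⬝ᵥ x₁ = c ∧ y ⬝ᵥ x₂ = c := by
  obtain ⟨α, β, hα, hβ, hαβ, rfl⟩ := hw
  simp only [dotProduct_add, dotProduct_smul, smul_eq_mul] at h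
  have key : α * (y ⬝ᵥ x₁ - c) + β * (y ⬝ᵥ x₂ - c) = 0 := by linear_combination h - c * hαβ
  obtain ⟨e₁, e₂⟩ := (add_eq_zero_iff_of_nonneg (mul_nonneg hα.le (sub_nonneg.2 h₁))
    (mul_nonneg hβ.le (sub_nonneg.2 h₂))).1 key
  exact ⟨sub_eq_zero.1 ((mul_eq_zero.1 e₁).resolve_left hα.ne'),
    sub_eq_zero.1 ((mul_eq_zero.1 e₂).resolve_left hβ.ne')⟩

theorem mem_convexHull_filter_of_dotProduct_eq {ι : Type*} [Fintype ι] {P : Finset (ι → ℝ)}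
    {x y : ι → ℝ} {c : ℝ} (hx : x ∈ convexHull ℝ ↑P) (hP : ∀ p ∈ P, c ≤ y ⬝ᵥ p)
    (hxc : y ⬝ᵥ x = c) : x ∈ convexHull ℝ ↑(P.filter fun p => y ⬝ᵥ p = c) := by
  obtain ⟨w, hw₀, hw₁, rfl⟩ := Finset.mem_convexHull'.1 hx
  have hsum : ∑ p ∈ P, w p * (y ⬝ᵥ p - c) = 0 := by
    simp only [mul_sub, Finset.sum_sub_distrib, ← Finset.sum_mul, hw₁, one_mul, ← hxc,
      dotProduct_sum, dotProduct_smul, smul_eq_mul, sub_self]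
  have hw : ∀ p ∈ P, w p ≠ 0 → y ⬝ᵥ p = c := fun p hp hwp =>
    sub_eq_zero.1 <| (mul_eq_zero.1 <| (Finset.sum_eq_zero_iff_of_nonneg fun q hq =>
      mul_nonneg (hw₀ q hq) (sub_nonneg.2 (hP q hq))).1 hsum p hp).resolve_left hwp
  refine Finset.mem_convexHull'.2 ⟨w, fun p hp => hw₀ p (Finset.mem_filter.1 hp).1, ?_, ?_⟩
  · rwa [Finset.sum_filter_of_ne hw]
  · exact Finset.sum_filter_of_ne fun p hp h => hw p hp (left_ne_zero_of_smul h)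

theorem AffineIndependent.finrank_vectorSpan_eq_card_sub_one {k V P ι : Type*} [DivisionRing k]
    [AddCommGroup V] [Module k V] [AddTorsor V P] [Fintype ι] {p : ι → P}
    (hp : AffineIndependent k p) :
    Module.finrank k (vectorSpan k (range p)) = Fintype.card ι - 1 := by
  cases isEmpty_or_nonempty ι
  · simp [range_eq_empty]
  · have := hp.finrank_vectorSpan_add_one
    omega

theorem Matrix.finrank_vectorSpan_image_compl {K ι : Type*} [Field K] [Fintype ι] [DecidableEq ι]
    {M : Matrix ι ι K} (hM : IsUnit M) (i : ι) :
    Module.finrank K (vectorSpan K (M '' {i}ᶜ)) = Fintype.card ι - 2 := by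
  have hind : AffineIndependent K fun k : ({i}ᶜ : Set ι) => M k :=
    ((linearIndependent_rows_of_isUnit hM).comp _ Subtype.val_injective).affineIndependent
  rw [show M '' {i}ᶜ = range fun k : ({i}ᶜ : Set ι) => M k from image_eq_range M.row _,
    hind.finrank_vectorSpan_eq_card_sub_one, Fintype.card_compl_set, Set.card_singleton]
  omega

theorem Finset.exists_range_eq_of_card_eq {α : Type*} {s : Finset α} {n : ℕ} (h : s.card = n) :
    ∃ f : Fin n → α, Set.range f = s :=
  ⟨(↑) ∘ (s.equivFinOfCardEq h).symm, by rw [EquivLike.range_comp, Subtype.range_coe]⟩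

section PolarDual

variable {n : ℕ}

noncomputable def facetVertices (P : Finset (Fin n → ℝ)) (y : Fin n → ℝ) : Finset (Fin n → ℝ) :=
  P.filter fun p => y ⬝ᵥ p = -1

theorem mem_polarDual_convexHull_iff {P : Set (Fin n → ℝ)} {y : Fin n → ℝ} :
    y ∈ polarDual (convexHull ℝ P) ↔ ∀ p ∈ P, -1 ≤ y ⬝ᵥ p :=
  ⟨fun h p hp => h p (subset_convexHull ℝ P hp),
    fun h _ hx => convexHull_min h (convex_halfSpace_ge (isLinearMap_dotProduct y) (-1)) hx⟩

theorem isClosed_polarDual (Q : Set (Fin n → ℝ)) : IsClosed (polarDual Q) := by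
  simp only [polarDual, ofPred_forall]
  exact isClosed_biInter fun u _ =>
    isClosed_le continuous_const (continuous_id.dotProduct continuous_const)

theorem eventually_add_smul_mem_polarDual {P : Finset (Fin n → ℝ)} {v d : Fin n → ℝ}
    (hv : v ∈ polarDual (convexHull ℝ ↑P)) (hd : ∀ p ∈ facetVertices P v, 0 ≤ d ⬝ᵥ p) :
    ∀ᶠ δ in 𝓝[>] (0 : ℝ), v + δ • d ∈ polarDual (convexHull ℝ ↑P) := by
  simp only [mem_polarDual_convexHull_iff, Finset.mem_coe, add_dotProduct, smul_dotProduct,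
    smul_eq_mul]
  refine (Finset.eventually_all P).2 fun p hp => ?_
  rcases (mem_polarDual_convexHull_iff.1 hv p hp).eq_or_lt with h | h
  · filter_upwards [self_mem_nhdsWithin] with δ (hδ : 0 < δ)
    have := hd p (Finset.mem_filter.2 ⟨hp, h.symm⟩)
    nlinarith
  · exact nhdsWithin_le_nhds (((continuous_const.add
      (continuous_id.mul continuous_const)).tendsto' 0 _ (by simp)).eventually
        (lt_mem_nhds h) |>.mono fun _ => le_of_lt)

theorem eq_zero_of_forall_facetVertices_dotProduct_eq_zero {P : Finset (Fin n → ℝ)}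
    {v d : Fin n → ℝ} (hv : v ∈ extremePoints ℝ (polarDual (convexHull ℝ ↑P)))
    (hd : ∀ p ∈ facetVertices P v, d ⬝ᵥ p = 0) : d = 0 := by
  have hpos := eventually_add_smul_mem_polarDual hv.1 fun p hp => (hd p hp).ge
  have hneg := eventually_add_smul_mem_polarDual (d := -d) hv.1 fun p hp => by
    simp [neg_dotProduct, hd p hp]
  obtain ⟨δ, ⟨hδ₁, hδ₂⟩, hδ : 0 < δ⟩ := (hneg.and hpos).and self_mem_nhdsWithin |>.exists
  rw [smul_neg, ← sub_eq_add_neg] at hδ₁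
  simpa [hδ.ne'] using hv.2 hδ₁ hδ₂ (mem_openSegment_sub_add v (δ • d))

theorem exists_mem_polarDual_dotProduct_eq_neg_one {Q : Set (Fin n → ℝ)} (hQ : Convex ℝ Q)
    (h0 : 0 ∈ interior Q) {u : Fin n → ℝ} (hu : u ∉ interior Q) :
    ∃ z ∈ polarDual Q, z ⬝ᵥ u = -1 := by
  obtain ⟨f, hf⟩ := geometric_hahn_banach_open_point hQ.interior isOpen_interior hu
  have hfu : 0 < f u := by simpa using hf 0 h0
  have hfQ : Q ⊆ {x | f x ≤ f u} := fun x hx =>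
    closure_minimal (fun y hy => (hf y hy).le) (isClosed_le f.continuous continuous_const)
      (hQ.closure_interior_eq_closure_of_nonempty_interior ⟨0, h0⟩ ▸ subset_closure hx)
  set y := (dotProductEquiv ℝ (Fin n)).symm f.toLinearMap
  have hy : ∀ x, y ⬝ᵥ x = f x := fun x => by
    rw [← dotProductEquiv_apply_apply, LinearEquiv.apply_symm_apply]; rfl
  refine ⟨-(f u)⁻¹ • y, fun x hx => ?_, ?_⟩
  · rw [smul_dotProduct, hy, smul_eq_mul, neg_mul, neg_le_neg_iff, inv_mul_le_one₀ hfu]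
    exact hfQ hx
  · rw [smul_dotProduct, hy, smul_eq_mul, neg_mul, inv_mul_cancel₀ hfu.ne']

theorem exists_pos_isGreatest_add_smul_mem_polarDual {P : Finset (Fin n → ℝ)} {v d u : Fin n → ℝ}
    (hv : v ∈ polarDual (convexHull ℝ ↑P)) (hd : ∀ p ∈ facetVertices P v, 0 ≤ d ⬝ᵥ p)
    (hu : u ∈ P) (hdu : d ⬝ᵥ u < 0) :
    ∃ μ > 0, IsGreatest {μ : ℝ | v + μ • d ∈ polarDual (convexHull ℝ ↑P)} μ := by
  set A := {μ : ℝ | v + μ • d ∈ polarDual (convexHull ℝ ↑P)}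
  have hclosed : IsClosed A :=
    (isClosed_polarDual _).preimage (continuous_const.add (continuous_id.smul continuous_const))
  have hbdd : BddAbove A := ⟨(v ⬝ᵥ u + 1) / -(d ⬝ᵥ u), fun μ hμ => by
    have := mem_polarDual_convexHull_iff.1 hμ u hu
    rw [add_dotProduct, smul_dotProduct, smul_eq_mul] at this
    rw [le_div_iff₀ (neg_pos.2 hdu)]
    linarith⟩
  obtain ⟨δ, hδA, hδ : 0 < δ⟩ :=
    (eventually_add_smul_mem_polarDual hv hd).and self_mem_nhdsWithin |>.exists
  exact ⟨sSup A, hδ.trans_le (le_csSup hbdd hδA), hclosed.csSup_mem ⟨δ, hδA⟩ hbdd,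
    fun _ hμ => le_csSup hbdd hμ⟩

theorem facetOf_inter_facetOf_convexHull {P : Finset (Fin n → ℝ)} {y y' : Fin n → ℝ}
    (hy : y ∈ polarDual (convexHull ℝ ↑P)) (hy' : y' ∈ polarDual (convexHull ℝ ↑P)) :
    facetOf (convexHull ℝ ↑P) y ∩ facetOf (convexHull ℝ ↑P) y' =
      convexHull ℝ ↑(facetVertices P y ∩ facetVertices P y') := by
  apply subset_antisymm
  · rintro x ⟨⟨hx, hyx⟩, -, hy'x⟩
    -- `y + y'` attains its minimum `-2` on `conv P` exactly on `F_y ∩ F_y'`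
    refine convexHull_mono (fun p hp => ?_) (mem_convexHull_filter_of_dotProduct_eq
      (y := y + y') (c := -2) hx (fun p hp => ?_) (by rw [add_dotProduct, hyx, hy'x]; norm_num))
    · obtain ⟨hpP, hp⟩ := Finset.mem_filter.1 hp
      have := mem_polarDual_convexHull_iff.1 hy p hpP
      have := mem_polarDual_convexHull_iff.1 hy' p hpP
      rw [add_dotProduct] at hp
      simp only [Finset.coe_inter, facetVertices, Finset.coe_filter]
      exact ⟨⟨hpP, by linarith⟩, hpP, by linarith⟩
    · rw [add_dotProduct]
      linarith [mem_polarDual_convexHull_iff.1 hy p hp, mem_polarDual_convexHull_iff.1 hy' p hp]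
  · refine convexHull_min ?_ (((convex_convexHull ℝ _).inter
      (convex_hyperplane (isLinearMap_dotProduct y) _)).inter
      ((convex_convexHull ℝ _).inter (convex_hyperplane (isLinearMap_dotProduct y') _)))
    intro p hp
    obtain ⟨hp, hp'⟩ := Finset.mem_inter.1 hp
    obtain ⟨hpP, hyp⟩ := Finset.mem_filter.1 hp
    exact ⟨⟨subset_convexHull ℝ _ hpP, hyp⟩, subset_convexHull ℝ _ hpP,
      (Finset.mem_filter.1 hp').2⟩

end PolarDual

section FacetMatrix

variable {n : ℕ} {P : Finset (Fin n → ℝ)} {M : Matrix (Fin n) (Fin n) ℝ} {v d : Fin n → ℝ}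
  {i : Fin n}

theorem row_mem_facetVertices (hM : Set.range M = facetVertices P v) (k : Fin n) :
    M k ∈ facetVertices P v :=
  Finset.mem_coe.1 (hM ▸ mem_range_self k)

theorem isUnit_of_range_eq_facetVertices
    (hv : v ∈ extremePoints ℝ (polarDual (convexHull ℝ ↑P)))
    (hM : Set.range M = facetVertices P v) : IsUnit M := by
  refine mulVec_injective_iff_isUnit.1 fun x y hxy => sub_eq_zero.1 <|
    eq_zero_of_forall_facetVertices_dotProduct_eq_zero hv fun p hp => ?_
  obtain ⟨k, rfl⟩ : p ∈ Set.range M := hM ▸ hp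
  rw [dotProduct_comm]
  exact congrFun (show M *ᵥ (x - y) = 0 by rw [mulVec_sub, hxy, sub_self]) k

theorem mulVec_eq_neg_one_of_range_eq_facetVertices (hM : Set.range M = facetVertices P v) :
    M *ᵥ v = -1 := funext fun k => by
  rw [mulVec, Pi.neg_apply, Pi.one_apply, dotProduct_comm]
  exact (Finset.mem_filter.1 (row_mem_facetVertices hM k)).2

theorem neg_one_le_row_dotProduct (hM : Set.range M = facetVertices P v) {x : Fin n → ℝ}
    (hx : x ∈ polarDual (convexHull ℝ ↑P)) (k : Fin n) : -1 ≤ M k ⬝ᵥ x := by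
  rw [dotProduct_comm]
  exact mem_polarDual_convexHull_iff.1 hx _ (Finset.mem_filter.1 (row_mem_facetVertices hM k)).1

theorem dotProduct_nonneg_of_mem_facetVertices (hM : Set.range M = facetVertices P v)
    (hd : M *ᵥ d = Pi.single i 1) : ∀ p ∈ facetVertices P v, 0 ≤ d ⬝ᵥ p := fun p hp => by
  obtain ⟨k, rfl⟩ : p ∈ Set.range M := hM ▸ hp
  rw [dotProduct_comm, show M k ⬝ᵥ d = (M *ᵥ d) k from rfl, hd, Pi.single_apply]
  split_ifs <;> norm_num

theorem row_dotProduct_add_smul (hMv : M *ᵥ v = -1) (hd : M *ᵥ d = Pi.single i 1) (μ : ℝ)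
    (k : Fin n) : M k ⬝ᵥ (v + μ • d) = -1 + μ * (Pi.single i 1 : Fin n → ℝ) k :=
  congrFun (show M *ᵥ (v + μ • d) = -1 + μ • Pi.single i 1 by
    rw [mulVec_add, mulVec_smul, hMv, hd]) k

theorem eq_add_smul_of_forall_ne_dotProduct_eq_neg_one (hM : IsUnit M) (hMv : M *ᵥ v = -1)
    (hd : M *ᵥ d = Pi.single i 1) {x : Fin n → ℝ} (hx : ∀ k ≠ i, M k ⬝ᵥ x = -1) :
    x = v + (M i ⬝ᵥ x + 1) • d := by
  refine mulVec_injective_iff_isUnit.2 hM (funext fun k => ?_)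
  rw [mulVec_add, mulVec_smul, hMv, hd]
  by_cases hk : k = i
  · subst hk; simp [mulVec]
  · simpa [hk, mulVec] using hx k hk

theorem add_smul_mem_extremePoints_polarDual (hM : Set.range M = facetVertices P v)
    (hMu : IsUnit M) (hd : M *ᵥ d = Pi.single i 1) {μ : ℝ}
    (hμ : IsGreatest {μ : ℝ | v + μ • d ∈ polarDual (convexHull ℝ ↑P)} μ) :
    v + μ • d ∈ extremePoints ℝ (polarDual (convexHull ℝ ↑P)) := by
  have hMv := mulVec_eq_neg_one_of_range_eq_facetVertices hM
  have hMw := row_dotProduct_add_smul hMv hd μ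
  refine ⟨hμ.1, fun x₁ hx₁ x₂ hx₂ hseg => ?_⟩
  have hfacets : ∀ k ≠ i, M k ⬝ᵥ x₁ = -1 ∧ M k ⬝ᵥ x₂ = -1 := fun k hk =>
    dotProduct_eq_of_mem_openSegment hseg (neg_one_le_row_dotProduct hM hx₁ k)
      (neg_one_le_row_dotProduct hM hx₂ k) (by simp [hMw, hk])
  have hx_eq : ∀ x ∈ polarDual (convexHull ℝ ↑P), (∀ k ≠ i, M k ⬝ᵥ x = -1) →
      x = v + (M i ⬝ᵥ x + 1) • d ∧ 1 - μ ≤ -M i ⬝ᵥ x := fun x hx hk => by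
    have h := eq_add_smul_of_forall_ne_dotProduct_eq_neg_one hMu hMv hd hk
    have := hμ.2 (show v + (M i ⬝ᵥ x + 1) • d ∈ _ by rwa [← h])
    exact ⟨h, by rw [neg_dotProduct]; linarith⟩
  obtain ⟨h₁, hle₁⟩ := hx_eq x₁ hx₁ fun k hk => (hfacets k hk).1
  have hle₂ := (hx_eq x₂ hx₂ fun k hk => (hfacets k hk).2).2
  have e₁ := (dotProduct_eq_of_mem_openSegment hseg hle₁ hle₂ (by
    rw [neg_dotProduct, hMw, Pi.single_eq_same]
    ring)).1
  rw [neg_dotProduct] at e₁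
  rw [h₁]
  congr 2
  linarith

theorem exists_mulVec_eq_single_dotProduct_neg (hM : Set.range M = facetVertices P v)
    (hMu : IsUnit M) {z u : Fin n → ℝ} (hz : z ∈ polarDual (convexHull ℝ ↑P))
    (hzu : z ⬝ᵥ u = -1) (hvu : -1 < v ⬝ᵥ u) :
    ∃ i d, M *ᵥ d = Pi.single i 1 ∧ d ⬝ᵥ u < 0 := by
  have hMv := mulVec_eq_neg_one_of_range_eq_facetVertices hM
  have hinv : M * M⁻¹ = 1 := M.mul_nonsing_inv ((M.isUnit_iff_isUnit_det).1 hMu)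
  have hinv' : M⁻¹ * M = 1 := M.nonsing_inv_mul ((M.isUnit_iff_isUnit_det).1 hMu)
  -- `M (z - v) ≥ 0` while `⟨u, z - v⟩ < 0`, so some coordinate of `u M⁻¹` is negative
  have hneg : u ᵥ* M⁻¹ ⬝ᵥ (M *ᵥ (z - v)) < 0 := by
    rw [← dotProduct_mulVec, mulVec_mulVec, hinv', one_mulVec, dotProduct_sub,
      dotProduct_comm u z, dotProduct_comm u v, hzu]
    linarith
  obtain ⟨i, hi⟩ : ∃ i, (u ᵥ* M⁻¹) i < 0 := by
    by_contra! h
    refine hneg.not_ge (Finset.sum_nonneg fun k _ => mul_nonneg (h k) ?_)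
    have : -1 ≤ (M *ᵥ z) k := neg_one_le_row_dotProduct hM hz k
    simp only [mulVec_sub, hMv, Pi.sub_apply, Pi.neg_apply, Pi.one_apply]
    linarith
  refine ⟨i, M⁻¹ *ᵥ Pi.single i 1, by rw [mulVec_mulVec, hinv, one_mulVec], ?_⟩
  rwa [dotProduct_comm, dotProduct_mulVec, dotProduct_single, mul_one]

theorem facetVertices_add_smul_inter_eq_image (hM : Set.range M = facetVertices P v)
    (hd : M *ᵥ d = Pi.single i 1) {μ : ℝ} (hμ : μ ≠ 0) :
    (↑(facetVertices P (v + μ • d) ∩ facetVertices P v) : Set (Fin n → ℝ)) = M '' {i}ᶜ := by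
  have hMw := row_dotProduct_add_smul (mulVec_eq_neg_one_of_range_eq_facetVertices hM) hd μ
  ext p
  rw [Finset.coe_inter, ← hM]
  constructor
  · rintro ⟨hw, k, rfl⟩
    refine ⟨k, fun hk => hμ ?_, rfl⟩
    have := (Finset.mem_filter.1 hw).2
    rw [dotProduct_comm, hMw, mem_singleton_iff.1 hk, Pi.single_eq_same] at this
    linarith
  · rintro ⟨k, hk, rfl⟩
    refine ⟨Finset.mem_filter.2 ⟨(Finset.mem_filter.1 (row_mem_facetVertices hM k)).1, ?_⟩,
      k, rfl⟩
    rw [dotProduct_comm, hMw, Pi.single_eq_of_ne hk, mul_zero, add_zero]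

end FacetMatrix

/-- If `(u,v)` realizes the minimum `ε_Q`, then `u` is adjacent to `F_v`:
some facet `F` of `Q` contains `u` and `F ∩ F_v` has dimension `n - 2`. -/
theorem minimizing_vertex_is_adjacent {n : ℕ} (hn : 1 ≤ n)
    (VQ VQd : Finset (Fin n → ℝ))
    -- `VQ` is the vertex set of the polytope `Q = conv(VQ)`
    (hVQ : (VQ : Set (Fin n → ℝ)) =
      Set.extremePoints ℝ (convexHull ℝ (VQ : Set (Fin n → ℝ))))
    -- `0` lies in the interior of `Q` (in particular `Q` is full-dimensional)
    (h0 : (0 : Fin n → ℝ) ∈ interior (convexHull ℝ (VQ : Set (Fin n → ℝ))))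
    -- `VQd` is the vertex set of the polar dual `Q*`
    (hVQd : (VQd : Set (Fin n → ℝ)) =
      Set.extremePoints ℝ (polarDual (convexHull ℝ (VQ : Set (Fin n → ℝ)))))
    -- `Q` is simplicial: every facet has exactly `n` vertices
    (hsimp : ∀ v ∈ VQd, (VQ.filter fun u => v ⬝ᵥ u = -1).card = n)
    -- the weight function `a : V(Q) → ℝ_{>0}`
    (a : (Fin n → ℝ) → ℝ) (ha : ∀ u ∈ VQ, 0 < a u)
    -- `ε` is the minimum `ε_Q`
    (ε : ℝ) (hε : IsLeast (epsSet VQ VQd a) ε)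
    -- `(u, v)` realizes the minimum, with `u ∉ F_v`
    (u v : Fin n → ℝ) (hu : u ∈ VQ) (hv : v ∈ VQd)
    (huFv : v ⬝ᵥ u ≠ -1) (hmin : a u * (1 + v ⬝ᵥ u) = ε) :
    ∃ v' ∈ VQd, u ∈ facetOf (convexHull ℝ (VQ : Set (Fin n → ℝ))) v' ∧
      Module.finrank ℝ
        (affineSpan ℝ (facetOf (convexHull ℝ (VQ : Set (Fin n → ℝ))) v' ∩
          facetOf (convexHull ℝ (VQ : Set (Fin n → ℝ))) v)).direction = n - 2 := by
  have : Nonempty (Fin n) := ⟨⟨0, hn⟩⟩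
  have hvext : v ∈ extremePoints ℝ (polarDual (convexHull ℝ ↑VQ)) := hVQd ▸ Finset.mem_coe.2 hv
  obtain ⟨M, hM⟩ : ∃ M : Matrix (Fin n) (Fin n) ℝ, Set.range M = facetVertices VQ v :=
    Finset.exists_range_eq_of_card_eq (hsimp v hv)
  have hMu := isUnit_of_range_eq_facetVertices hvext hM
  obtain ⟨z, hz, hzu⟩ := exists_mem_polarDual_dotProduct_eq_neg_one (convex_convexHull ℝ _) h0
    (disjoint_right.1 (disjoint_interior_extremePoints _) (hVQ ▸ Finset.mem_coe.2 hu))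
  obtain ⟨i, d, hd, hdu⟩ := exists_mulVec_eq_single_dotProduct_neg hM hMu hz hzu
    ((hvext.1 u (subset_convexHull ℝ _ hu)).lt_of_ne (Ne.symm huFv))
  obtain ⟨μ, hμ, hgreat⟩ := exists_pos_isGreatest_add_smul_mem_polarDual hvext.1
    (dotProduct_nonneg_of_mem_facetVertices hM hd) hu hdu
  have hwext := add_smul_mem_extremePoints_polarDual hM hMu hd hgreat
  have hwVQd : v + μ • d ∈ VQd := by rw [← Finset.mem_coe, hVQd]; exact hwext
  have hwu : (v + μ • d) ⬝ᵥ u = -1 := by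
    by_contra hne
    have := hε.2 ⟨u, hu, _, hwVQd, hne, rfl⟩
    rw [add_dotProduct, smul_dotProduct, smul_eq_mul] at this
    nlinarith [mul_pos (ha u hu) (mul_pos hμ (neg_pos.2 hdu))]
  refine ⟨_, hwVQd, ⟨subset_convexHull ℝ _ hu, hwu⟩, ?_⟩
  rw [facetOf_inter_facetOf_convexHull hwext.1 hvext.1, affineSpan_convexHull,
    direction_affineSpan, facetVertices_add_smul_inter_eq_image hM hd hμ.ne',
    Matrix.finrank_vectorSpan_image_compl hMu, Fintype.card_fin]
end

section
/- Let Q ⊂ ℝ^n be a full-dimensional simplicial convex polytope with 0 in its interior. Let v ∈ V(Q*) and let e_1,…,e_n be the n vertices of F_v; they form a basis of ℝ^n, with dual basis (e_1*,…,e_n*) of (ℝ^n)*. For j ∈ {1,…,n}, let F_j be the unique facet of Q distinct from F_v containing all e_i with i ≠ j, let u^j be the vertex of F_j not belonging to {e_i : i ≠ j}, and let v^j ∈ V(Q*) be the vertex of Q* corresponding to F_j. Then u^j ∉ {e_1,…,e_n}, ⟨e_j*,u^j⟩ < 0, the number γ_j := (−1−⟨v,u^j⟩)/⟨e_j*,u^j⟩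 is strictly positive, and v^j = v + γ_j e_j*. -/
open Matrix

/-! Since `v^j` agrees with `v` on the basis vectors `e_i`, `i ≠ j`, it equals `v + (t + 1) e_j*`
with `t = ⟨v^j, e_j⟩`, and `t > -1` because `v^j ≠ v`. Pairing with `u^j` gives
`(t + 1) ⟨e_j*, u^j⟩ = -1 - ⟨v, u^j⟩`, which is negative because `u^j` lies off the facet `F_v`.
Hence `⟨e_j*, u^j⟩ < 0` and `γ_j = t + 1 > 0`. -/

section DualBasis

variable {R m : Type*} [CommRing R] [Fintype m] [DecidableEq m] {e estar : m → m → R}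

theorem dotProduct_eq_sum_mul_of_dual (h : ∀ i k, estar i ⬝ᵥ e k = if i = k then 1 else 0)
    (w u : m → R) : w ⬝ᵥ u = ∑ i, (w ⬝ᵥ e i) * (estar i ⬝ᵥ u) := by
  have hES : (of e)ᵀ * of estar = 1 := mul_eq_one_comm.mp <| by
    ext i k
    simpa [mul_apply, dotProduct, one_apply] using h i k
  calc w ⬝ᵥ u = w ⬝ᵥ ((of e)ᵀ *ᵥ (of estar *ᵥ u)) := by rw [mulVec_mulVec, hES, one_mulVec]
    _ = (of e *ᵥ w) ⬝ᵥ (of estar *ᵥ u) := by rw [dotProduct_mulVec, vecMul_transpose]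
    _ = ∑ i, (w ⬝ᵥ e i) * (estar i ⬝ᵥ u) := by
      simp_rw [dotProduct_comm w]; rfl

theorem eq_of_dotProduct_eq_of_dual (h : ∀ i k, estar i ⬝ᵥ e k = if i = k then 1 else 0)
    {a b : m → R} (hab : ∀ i, a ⬝ᵥ e i = b ⬝ᵥ e i) : a = b :=
  dotProduct_eq a b fun u => by
    rw [dotProduct_eq_sum_mul_of_dual h a u, dotProduct_eq_sum_mul_of_dual h b u]
    simp only [hab]

theorem eq_add_smul_of_dotProduct_eq_of_ne_of_dual
    (h : ∀ i k, estar i ⬝ᵥ e k = if i = k then 1 else 0) {a b : m → R} {j : m}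
    (hab : ∀ i, i ≠ j → a ⬝ᵥ e i = b ⬝ᵥ e i) :
    a = b + (a ⬝ᵥ e j - b ⬝ᵥ e j) • estar j := by
  refine eq_of_dotProduct_eq_of_dual h fun i => ?_
  rw [add_dotProduct, smul_dotProduct, h, smul_eq_mul]
  by_cases hij : i = j
  · subst hij; simp
  · simp [hab i hij, Ne.symm hij]

end DualBasis

theorem adjacent_facet_dual_vertex_general {n : ℕ}
    (VQ VQd : Finset (Fin n → ℝ))
    -- `VQd` is the vertex set of the polar dual `Q*`
    (hVQd : (VQd : Set (Fin n → ℝ)) =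
      Set.extremePoints ℝ (polarDual (convexHull ℝ (VQ : Set (Fin n → ℝ)))))
    -- fix `v ∈ V(Q*)`
    (v : Fin n → ℝ) (hv : v ∈ VQd)
    -- `e_1, …, e_n` are the vertices of the facet `F_v`
    (e : Fin n → (Fin n → ℝ))
    (heV : ∀ i, e i ∈ VQ) (heF : ∀ i, v ⬝ᵥ e i = -1)
    (heAll : ∀ u ∈ VQ, v ⬝ᵥ u = -1 → ∃ i, u = e i)
    -- `(e_1*, …, e_n*)` is the dual basis of `(e_1, …, e_n)`
    (estar : Fin n → (Fin n → ℝ))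
    (hestar : ∀ i k, estar i ⬝ᵥ e k = if i = k then 1 else 0)
    -- fix `j` and let `F_j` (with dual vertex `v^j ∈ V(Q*)`) be the facet of `Q`,
    -- distinct from `F_v`, containing all `e_i` with `i ≠ j`
    (j : Fin n) (vj : Fin n → ℝ) (hvj : vj ∈ VQd) (hvjne : vj ≠ v)
    (hvje : ∀ i, i ≠ j → vj ⬝ᵥ e i = -1)
    -- `u^j` is the vertex of `F_j` not belonging to `{e_i : i ≠ j}`
    (uj : Fin n → ℝ) (hujV : uj ∈ VQ) (hujF : vj ⬝ᵥ uj = -1)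
    (hujne : ∀ i, i ≠ j → uj ≠ e i) :
    uj ∉ Set.range e ∧
    estar j ⬝ᵥ uj < 0 ∧
    0 < (-1 - v ⬝ᵥ uj) / (estar j ⬝ᵥ uj) ∧
    vj = v + ((-1 - v ⬝ᵥ uj) / (estar j ⬝ᵥ uj)) • estar j := by
  have hdual : ∀ w ∈ VQd, ∀ u ∈ VQ, -1 ≤ w ⬝ᵥ u := fun w hw u hu =>
    (hVQd.le hw).1 u (subset_convexHull ℝ _ hu)
  set t := vj ⬝ᵥ e j
  have hvj_eq : vj = v + (t + 1) • estar j := by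
    simpa [heF] using eq_add_smul_of_dotProduct_eq_of_ne_of_dual hestar fun i hi =>
      (hvje i hi).trans (heF i).symm
  have ht : -1 < t := by
    refine lt_of_le_of_ne (hdual vj hvj (e j) (heV j)) fun h => hvjne ?_
    rw [hvj_eq, ← h, neg_add_cancel, zero_smul, add_zero]
  have huj : uj ∉ Set.range e := by
    rintro ⟨i, rfl⟩
    by_cases hij : i = j
    · subst hij; exact ht.ne' hujF
    · exact hujne i hij rfl
  have hv_uj : -1 < v ⬝ᵥ uj := (hdual v hv uj hujV).lt_of_ne fun h =>
    huj <| (heAll uj hujV h.symm).imp fun _ => Eq.symm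
  have hpair : (t + 1) * (estar j ⬝ᵥ uj) = -1 - v ⬝ᵥ uj := by
    rw [← hujF, hvj_eq, add_dotProduct, smul_dotProduct, smul_eq_mul]; ring
  have hc : estar j ⬝ᵥ uj < 0 := by nlinarith
  have hγ : (-1 - v ⬝ᵥ uj) / (estar j ⬝ᵥ uj) = t + 1 := by
    rw [← hpair, mul_div_cancel_right₀ _ hc.ne]
  exact ⟨huj, hc, hγ ▸ by linarith, hγ ▸ hvj_eq⟩

/-- Let `v ∈ V(Q*)`, let `e_1, …, e_n` be the vertices of `F_v` (a basis of
`ℝ^n` with dual basis `e_1*, …, e_n*`).  For `j`, let `F_j` (with corresponding dual vertex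
`v^j`) be the facet of `Q` distinct from `F_v` containing all `e_i`, `i ≠ j`, and let `u^j` be
the vertex of `F_j` not among `{e_i : i ≠ j}`.  Then `u^j ∉ {e_1, …, e_n}`, `⟨e_j*, u^j⟩ < 0`,
`γ_j := (-1 - ⟨v, u^j⟩)/⟨e_j*, u^j⟩ > 0`, and `v^j = v + γ_j e_j*`. -/
theorem adjacent_facet_dual_vertex {n : ℕ} (hn : 1 ≤ n)
    (VQ VQd : Finset (Fin n → ℝ))
    -- `VQ` is the vertex set of the polytope `Q = conv(VQ)`
    (hVQ : (VQ : Set (Fin n → ℝ)) =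
      Set.extremePoints ℝ (convexHull ℝ (VQ : Set (Fin n → ℝ))))
    -- `0` lies in the interior of `Q` (in particular `Q` is full-dimensional)
    (h0 : (0 : Fin n → ℝ) ∈ interior (convexHull ℝ (VQ : Set (Fin n → ℝ))))
    -- `VQd` is the vertex set of the polar dual `Q*`
    (hVQd : (VQd : Set (Fin n → ℝ)) =
      Set.extremePoints ℝ (polarDual (convexHull ℝ (VQ : Set (Fin n → ℝ)))))
    -- `Q` is simplicial: every facet has exactly `n` vertices
    (hsimp : ∀ v ∈ VQd, (VQ.filter fun u => v ⬝ᵥ u = -1).card = n)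
    -- fix `v ∈ V(Q*)`
    (v : Fin n → ℝ) (hv : v ∈ VQd)
    -- `e_1, …, e_n` are the vertices of the facet `F_v`
    (e : Fin n → (Fin n → ℝ)) (he : Function.Injective e)
    (heV : ∀ i, e i ∈ VQ) (heF : ∀ i, v ⬝ᵥ e i = -1)
    (heAll : ∀ u ∈ VQ, v ⬝ᵥ u = -1 → ∃ i, u = e i)
    -- `(e_1*, …, e_n*)` is the dual basis of `(e_1, …, e_n)`
    (estar : Fin n → (Fin n → ℝ))
    (hestar : ∀ i k, estar i ⬝ᵥ e k = if i = k then 1 else 0)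
    -- fix `j` and let `F_j` (with dual vertex `v^j ∈ V(Q*)`) be the facet of `Q`,
    -- distinct from `F_v`, containing all `e_i` with `i ≠ j`
    (j : Fin n) (vj : Fin n → ℝ) (hvj : vj ∈ VQd) (hvjne : vj ≠ v)
    (hvje : ∀ i, i ≠ j → vj ⬝ᵥ e i = -1)
    -- `u^j` is the vertex of `F_j` not belonging to `{e_i : i ≠ j}`
    (uj : Fin n → ℝ) (hujV : uj ∈ VQ) (hujF : vj ⬝ᵥ uj = -1)
    (hujne : ∀ i, i ≠ j → uj ≠ e i) :
    uj ∉ Set.range e ∧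
    estar j ⬝ᵥ uj < 0 ∧
    0 < (-1 - v ⬝ᵥ uj) / (estar j ⬝ᵥ uj) ∧
    vj = v + ((-1 - v ⬝ᵥ uj) / (estar j ⬝ᵥ uj)) • estar j :=
  adjacent_facet_dual_vertex_general VQ VQd hVQd v hv e heV heF heAll estar hestar j vj hvj hvjne
    hvje uj hujV hujF hujne
end

section
/- Let Q ⊂ ℝ^n be a full-dimensional convex polytope with 0 in its interior, with weight function a : V(Q) → ℝ_{>0}, and suppose (m_v)_{v∈V(Q*)} are strictly positive real numbers with Σ_{v∈V(Q*)} m_v·v = 0. Set M := Σ_{v∈V(Q*)} m_v, and for u ∈ V(Q) set A(u) := {v ∈ V(Q*) : ⟨v,u⟩ = −1}. Then for every u ∈ V(Q): (ε_Q − a(u))·M ≤ ε_Q · Σ_{v∈A(u)} m_v. -/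
open Matrix

/-- Suppose `(m_v)_{v ∈ V(Q*)}` are positive reals with `Σ m_v · v = 0`, and
set `M := Σ m_v` and `A(u) := {v ∈ V(Q*) : ⟨v,u⟩ = -1}`.  Then for every `u ∈ V(Q)`:
`(ε_Q - a(u))·M ≤ ε_Q · Σ_{v ∈ A(u)} m_v`. -/
theorem eps_weight_inequality {n : ℕ} (hn : 1 ≤ n)
    (VQ VQd : Finset (Fin n → ℝ))
    -- `VQ` is the vertex set of the polytope `Q = conv(VQ)`
    (hVQ : (VQ : Set (Fin n → ℝ)) =
      Set.extremePoints ℝ (convexHull ℝ (VQ : Set (Fin n → ℝ))))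
    -- `0` lies in the interior of `Q` (in particular `Q` is full-dimensional)
    (h0 : (0 : Fin n → ℝ) ∈ interior (convexHull ℝ (VQ : Set (Fin n → ℝ))))
    -- `VQd` is the vertex set of the polar dual `Q*`
    (hVQd : (VQd : Set (Fin n → ℝ)) =
      Set.extremePoints ℝ (polarDual (convexHull ℝ (VQ : Set (Fin n → ℝ)))))
    -- the weight function `a : V(Q) → ℝ_{>0}`
    (a : (Fin n → ℝ) → ℝ) (ha : ∀ u ∈ VQ, 0 < a u)
    -- `ε` is the minimum `ε_Q`
    (ε : ℝ) (hε : IsLeast (epsSet VQ VQd a) ε)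
    -- positive reals `(m_v)` with `Σ_{v ∈ V(Q*)} m_v · v = 0`
    (m : (Fin n → ℝ) → ℝ) (hm : ∀ v ∈ VQd, 0 < m v)
    (hrel : ∑ v ∈ VQd, m v • v = 0) :
    ∀ u ∈ VQ,
      (ε - a u) * (∑ v ∈ VQd, m v) ≤
        ε * ∑ v ∈ VQd.filter (fun v => v ⬝ᵥ u = -1), m v := by
  intro u hu
  -- every v ∈ VQd lies in the polar dual
  have hge : ∀ v ∈ VQd, -1 ≤ v ⬝ᵥ u := by
    intro v hv
    have hv' : v ∈ Set.extremePoints ℝ (polarDual (convexHull ℝ (VQ : Set (Fin n → ℝ)))) :=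
      hVQd ▸ Finset.mem_coe.mpr hv
    exact hv'.1 u (subset_convexHull ℝ _ hu)
  have hsum0 : ∑ v ∈ VQd, m v * (v ⬝ᵥ u) = 0 := by
    have h := congrArg (fun w => w ⬝ᵥ u) hrel
    simp only [zero_dotProduct, dotProduct, Finset.sum_apply,
      Pi.smul_apply, smul_eq_mul, Finset.sum_mul, Pi.zero_apply, zero_mul,
      Finset.sum_const_zero] at h
    rw [Finset.sum_comm] at h
    calc ∑ v ∈ VQd, m v * (v ⬝ᵥ u) = ∑ v ∈ VQd, ∑ i, m v * v i * u i := by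
          simp [dotProduct, Finset.mul_sum, mul_assoc]
      _ = 0 := h
  set M := ∑ v ∈ VQd, m v with hM
  set S := ∑ v ∈ VQd.filter (fun v => v ⬝ᵥ u = -1), m v with hS
  have hsplit := Finset.sum_filter_add_sum_filter_not VQd (fun v => v ⬝ᵥ u = -1)
    (fun v => m v)
  have hkey : ∀ v ∈ VQd.filter (fun v => ¬ v ⬝ᵥ u = -1),
      ε * m v ≤ a u * (1 + v ⬝ᵥ u) * m v := by
    intro v hv
    rw [Finset.mem_filter] at hv
    have hmem : a u * (1 + v ⬝ᵥ u) ∈ epsSet VQ VQd a :=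
      ⟨u, hu, v, hv.1, hv.2, rfl⟩
    exact mul_le_mul_of_nonneg_right (hε.2 hmem) (hm v hv.1).le
  have hsumf : ∑ v ∈ VQd.filter (fun v => ¬ v ⬝ᵥ u = -1), a u * (1 + v ⬝ᵥ u) * m v
      = a u * M := by
    have hzero : ∑ v ∈ VQd.filter (fun v => v ⬝ᵥ u = -1), a u * (1 + v ⬝ᵥ u) * m v = 0 := by
      apply Finset.sum_eq_zero
      intro v hv
      rw [Finset.mem_filter] at hv
      rw [hv.2]; ring
    have hall : ∑ v ∈ VQd, a u * (1 + v ⬝ᵥ u) * m v = a u * M := by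
      have : ∑ v ∈ VQd, a u * (1 + v ⬝ᵥ u) * m v
          = a u * (∑ v ∈ VQd, m v + ∑ v ∈ VQd, m v * (v ⬝ᵥ u)) := by
        rw [← Finset.sum_add_distrib, Finset.mul_sum]
        apply Finset.sum_congr rfl
        intro v _; ring
      rw [this, hsum0, add_zero]
    have := Finset.sum_filter_add_sum_filter_not VQd (fun v => v ⬝ᵥ u = -1)
      (fun v => a u * (1 + v ⬝ᵥ u) * m v)
    linarith [this, hzero, hall]
  have h1 : ε * (M - S) ≤ a u * M := by
    have h2 : ∑ v ∈ VQd.filter (fun v => ¬ v ⬝ᵥ u = -1), ε * m v ≤ a u * M := by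
      rw [← hsumf]; exact Finset.sum_le_sum hkey
    have h3 : ∑ v ∈ VQd.filter (fun v => ¬ v ⬝ᵥ u = -1), ε * m v = ε * (M - S) := by
      rw [← Finset.mul_sum]
      congr 1
      linarith [hsplit]
    linarith [h2, h3.symm.le, h3.le]
  nlinarith [h1]
end

section
/- Let Q ⊂ ℝ^n be a full-dimensional simplicial convex polytope with 0 in its interior, with weight function a : V(Q) → ℝ_{>0}, satisfying Condition (1'): for every u ∈ V(Q) and v ∈ V(Q*), a(u)(1+⟨v,u⟩) equals either 0 or ε_Q. With the notation of Condition (1') below (v ∈ V(Q*) fixed, e_1,…,e_n the vertices of F_v, dual basis (e_1*,…,e_n*), F_k the adjacent facet across the ridge spanned by {e_i : i ≠ k}, and v_k ∈ V(Q*) its corresponding vertex), one has for every k ∈ {1,…,n}: v_k = v + (ε_Q/a(e_k))·e_k*. -/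
open Matrix

/-- Assume Condition (1'): `a(u)(1 + ⟨v,u⟩) ∈ {0, ε_Q}` for all `u ∈ V(Q)`,
`v ∈ V(Q*)`.  Fix `v ∈ V(Q*)`, let `e_1, …, e_n` be the vertices of `F_v` with dual basis
`(e_1*, …, e_n*)`, let `f_1, …, f_r` be the remaining vertices of `Q`, and for each `k` let
`F_k` be the facet adjacent to `F_v` across the ridge spanned by `{e_i : i ≠ k}`, with
vertices `{e_i : i ≠ k} ∪ {f_{φ(k)}}` and corresponding dual vertex `v_k ∈ V(Q*)`.  Then
`v_k = v + (ε_Q / a(e_k)) e_k*` for every `k`. -/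
theorem condition1'_dual_vertex_formula {n : ℕ} (hn : 1 ≤ n)
    (VQ VQd : Finset (Fin n → ℝ))
    -- `VQ` is the vertex set of the polytope `Q = conv(VQ)`
    (hVQ : (VQ : Set (Fin n → ℝ)) =
      Set.extremePoints ℝ (convexHull ℝ (VQ : Set (Fin n → ℝ))))
    -- `0` lies in the interior of `Q` (in particular `Q` is full-dimensional)
    (h0 : (0 : Fin n → ℝ) ∈ interior (convexHull ℝ (VQ : Set (Fin n → ℝ))))
    -- `VQd` is the vertex set of the polar dual `Q*`
    (hVQd : (VQd : Set (Fin n → ℝ)) =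
      Set.extremePoints ℝ (polarDual (convexHull ℝ (VQ : Set (Fin n → ℝ)))))
    -- `Q` is simplicial: every facet has exactly `n` vertices
    (hsimp : ∀ v ∈ VQd, (VQ.filter fun u => v ⬝ᵥ u = -1).card = n)
    -- the weight function `a : V(Q) → ℝ_{>0}`
    (a : (Fin n → ℝ) → ℝ) (ha : ∀ u ∈ VQ, 0 < a u)
    -- `ε` is the minimum `ε_Q`
    (ε : ℝ) (hε : IsLeast (epsSet VQ VQd a) ε)
    -- Condition (1')
    (hcond : ∀ u ∈ VQ, ∀ v ∈ VQd, a u * (1 + v ⬝ᵥ u) = 0 ∨ a u * (1 + v ⬝ᵥ u) = ε)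
    -- fix `v ∈ V(Q*)`; `e_1, …, e_n` are the vertices of the facet `F_v`
    (v : Fin n → ℝ) (hv : v ∈ VQd)
    (e : Fin n → (Fin n → ℝ)) (he : Function.Injective e)
    (heV : ∀ i, e i ∈ VQ) (heF : ∀ i, v ⬝ᵥ e i = -1)
    (heAll : ∀ u ∈ VQ, v ⬝ᵥ u = -1 → ∃ i, u = e i)
    -- `(e_1*, …, e_n*)` is the dual basis of `(e_1, …, e_n)`
    (estar : Fin n → (Fin n → ℝ))
    (hestar : ∀ i k, estar i ⬝ᵥ e k = if i = k then 1 else 0)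
    -- `f_1, …, f_r` are the remaining vertices of `Q`
    (r : ℕ) (f : Fin r → (Fin n → ℝ)) (hf : Function.Injective f)
    (hfV : ∀ j, f j ∈ VQ) (hef : ∀ j i, f j ≠ e i)
    (hVQef : (VQ : Set (Fin n → ℝ)) = Set.range e ∪ Set.range f)
    -- for each `k`, `F_k` is the facet of `Q` adjacent to `F_v` across the ridge spanned by
    -- `{e_i : i ≠ k}`; its vertices are `{e_i : i ≠ k} ∪ {f_{φ(k)}}` and its corresponding
    -- dual vertex is `vk k ∈ V(Q*)`
    (φ : Fin n → Fin r) (vk : Fin n → (Fin n → ℝ))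
    (hvkV : ∀ k, vk k ∈ VQd) (hvkne : ∀ k, vk k ≠ v)
    (hvke : ∀ k i, i ≠ k → vk k ⬝ᵥ e i = -1)
    (hvkf : ∀ k, vk k ⬝ᵥ f (φ k) = -1)
    (hvkAll : ∀ k, ∀ u ∈ VQ, vk k ⬝ᵥ u = -1 → (∃ i, i ≠ k ∧ u = e i) ∨ u = f (φ k)) :
    ∀ k, vk k = v + (ε / a (e k)) • estar k := by

  intro k
  have hak := ha (e k) (heV k)
  have hεa : vk k ⬝ᵥ e k = -1 + ε / a (e k) := by
    have hne : vk k ⬝ᵥ e k ≠ -1 := by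
      intro h
      rcases hvkAll k (e k) (heV k) h with ⟨i, hik, hi⟩ | hfk
      · exact hik (he hi.symm)
      · exact hef (φ k) k hfk.symm
    rcases hcond (e k) (heV k) (vk k) (hvkV k) with h | h
    · exact absurd (by nlinarith : vk k ⬝ᵥ e k = -1) hne
    · field_simp
      nlinarith [h]
  set M : Matrix (Fin n) (Fin n) ℝ := Matrix.of fun i j => e i j with hM
  set N : Matrix (Fin n) (Fin n) ℝ := Matrix.of fun i j => estar i j with hN
  have hNM : N * Mᵀ = 1 := by
    ext i j
    have := hestar i j
    simpa [Matrix.mul_apply, Matrix.one_apply, hM, hN, Matrix.transpose_apply,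
      dotProduct] using this
  have hMN : Mᵀ * N = 1 := mul_eq_one_comm.mp hNM
  have hNtM : Nᵀ * M = 1 := by
    have := congrArg Matrix.transpose hMN
    simpa [Matrix.transpose_mul] using this
  set w : Fin n → ℝ := vk k - (v + (ε / a (e k)) • estar k) with hw
  have hMw : M *ᵥ w = 0 := by
    ext i
    have hdp : (M *ᵥ w) i = w ⬝ᵥ e i := by
      simp [Matrix.mulVec, dotProduct, hM, mul_comm]
    rw [hdp]
    have : w ⬝ᵥ e i = vk k ⬝ᵥ e i - (v ⬝ᵥ e i + (ε / a (e k)) * (estar k ⬝ᵥ e i)) := by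
      simp [hw, sub_dotProduct, add_dotProduct, smul_dotProduct,
        smul_eq_mul]
    rw [this]
    by_cases hik : i = k
    · subst hik
      rw [hεa, heF i, hestar i i]
      simp
    · rw [hvke k i hik, heF i, hestar k i, if_neg (Ne.symm hik)]
      simp
  have hw0 : w = 0 := by
    have : Nᵀ *ᵥ (M *ᵥ w) = w := by
      rw [Matrix.mulVec_mulVec, hNtM, Matrix.one_mulVec]
    rw [hMw, Matrix.mulVec_zero] at this
    exact this.symm
  have := sub_eq_zero.mp hw0
  exact this
end

section
/- Let Q ⊂ ℝ^n be a full-dimensional simplicial convex polytope with 0 in its interior, with weight function a : V(Q) → ℝ_{>0}, satisfying Condition (1'): for every u ∈ V(Q) and v ∈ V(Q*), a(u)(1+⟨v,u⟩) equals either 0 or ε_Q. With the notation of Condition (1') below, one has for all k ∈ {1,…,n} and j ∈ {1,…,r}: ⟨e_k*, f_j⟩ = −a(e_k)/a(f_j) if φ(k) = j, and ⟨e_k*, f_j⟩ = 0 otherwise. -/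
open Matrix

/-!
Write `f_j = ∑ᵢ cᵢ eᵢ` with `cᵢ = ⟨eᵢ*, f_j⟩`. Since `v` and `v_k` both take the value `-1` on
every `eᵢ` with `i ≠ k`, the difference `⟨v_k, f_j⟩ - ⟨v, f_j⟩` is `(1 + ⟨v_k, e_k⟩) c_k`.
Condition (1') evaluates every pairing of a vertex off a facet: `1 + ⟨w, u⟩ = ε_Q / a(u)`.
So this difference is `(ε_Q / a(e_k)) c_k` on the one hand, and on the other it is
`-ε_Q / a(f_j)` if `f_j` is the extra vertex `f_{φ(k)}` of `F_k` and `0` otherwise.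
As `ε_Q ≠ 0`, solving for `c_k` gives the formula.
-/

theorem dotProduct_eq_sum_mul_of_biorthogonal {R ι : Type*} [CommRing R] [Fintype ι]
    [DecidableEq ι] {e estar : ι → ι → R}
    (hestar : ∀ i k, estar i ⬝ᵥ e k = if i = k then 1 else 0) (w x : ι → R) :
    w ⬝ᵥ x = ∑ i, (w ⬝ᵥ e i) * (estar i ⬝ᵥ x) := by
  have hSE : Matrix.of estar * (Matrix.of e)ᵀ = 1 := by
    ext i k
    simpa [Matrix.mul_apply, Matrix.one_apply, dotProduct] using hestar i k
  have hES : (Matrix.of e)ᵀ * Matrix.of estar = 1 := mul_eq_one_comm.mp hSE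
  calc w ⬝ᵥ x = w ⬝ᵥ ((Matrix.of e)ᵀ *ᵥ (Matrix.of estar *ᵥ x)) := by
        rw [Matrix.mulVec_mulVec, hES, Matrix.one_mulVec]
    _ = ∑ i, (w ⬝ᵥ e i) * (estar i ⬝ᵥ x) := by
        rw [Matrix.dotProduct_mulVec]
        simp only [dotProduct, Matrix.vecMul, Matrix.mulVec, Matrix.transpose_apply,
          Matrix.of_apply]

theorem dotProduct_sub_dotProduct_of_adjacent_facets {R ι : Type*} [CommRing R] [Fintype ι]
    [DecidableEq ι] {e estar : ι → ι → R}
    (hestar : ∀ i k, estar i ⬝ᵥ e k = if i = k then 1 else 0) {v w : ι → R} {k : ι}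
    (hv : ∀ i, v ⬝ᵥ e i = -1) (hw : ∀ i, i ≠ k → w ⬝ᵥ e i = -1) (x : ι → R) :
    w ⬝ᵥ x - v ⬝ᵥ x = (1 + w ⬝ᵥ e k) * (estar k ⬝ᵥ x) := by
  rw [← sub_dotProduct, dotProduct_eq_sum_mul_of_biorthogonal hestar,
    Finset.sum_eq_single k (fun i _ hik => by rw [sub_dotProduct, hw i hik, hv i]; ring)
      (by simp), sub_dotProduct, hv k, sub_neg_eq_add, add_comm]

theorem one_add_dotProduct_eq_div {n : ℕ} {a : (Fin n → ℝ) → ℝ} {ε : ℝ} {u w : Fin n → ℝ}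
    (hau : a u ≠ 0) (hcond : a u * (1 + w ⬝ᵥ u) = 0 ∨ a u * (1 + w ⬝ᵥ u) = ε)
    (hwu : w ⬝ᵥ u ≠ -1) : 1 + w ⬝ᵥ u = ε / a u := by
  have hpos : 1 + w ⬝ᵥ u ≠ 0 := fun h => hwu (by linarith)
  rw [eq_div_iff hau, mul_comm]
  exact hcond.resolve_left (mul_ne_zero hau hpos)

theorem ne_zero_of_mem_epsSet {n : ℕ} {VQ VQd : Finset (Fin n → ℝ)} {a : (Fin n → ℝ) → ℝ}
    (ha : ∀ u ∈ VQ, 0 < a u) {ε : ℝ} (hε : ε ∈ epsSet VQ VQd a) : ε ≠ 0 := by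
  obtain ⟨u, hu, w, -, hwu, rfl⟩ := hε
  exact mul_ne_zero (ha u hu).ne' fun h => hwu (by linarith)

theorem condition1'_dual_pairing_formula_general {n : ℕ}
    (VQ VQd : Finset (Fin n → ℝ))
    -- the weight function `a : V(Q) → ℝ_{>0}`
    (a : (Fin n → ℝ) → ℝ) (ha : ∀ u ∈ VQ, 0 < a u)
    -- `ε` is the minimum `ε_Q`
    (ε : ℝ) (hε : IsLeast (epsSet VQ VQd a) ε)
    -- Condition (1')
    (hcond : ∀ u ∈ VQ, ∀ v ∈ VQd, a u * (1 + v ⬝ᵥ u) = 0 ∨ a u * (1 + v ⬝ᵥ u) = ε)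
    -- fix `v ∈ V(Q*)`; `e_1, …, e_n` are the vertices of the facet `F_v`
    (v : Fin n → ℝ) (hv : v ∈ VQd)
    (e : Fin n → (Fin n → ℝ)) (he : Function.Injective e)
    (heV : ∀ i, e i ∈ VQ) (heF : ∀ i, v ⬝ᵥ e i = -1)
    (heAll : ∀ u ∈ VQ, v ⬝ᵥ u = -1 → ∃ i, u = e i)
    -- `(e_1*, …, e_n*)` is the dual basis of `(e_1, …, e_n)`
    (estar : Fin n → (Fin n → ℝ))
    (hestar : ∀ i k, estar i ⬝ᵥ e k = if i = k then 1 else 0)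
    -- `f_1, …, f_r` are the remaining vertices of `Q`
    (r : ℕ) (f : Fin r → (Fin n → ℝ)) (hf : Function.Injective f)
    (hfV : ∀ j, f j ∈ VQ) (hef : ∀ j i, f j ≠ e i)
    -- for each `k`, `F_k` is the facet of `Q` adjacent to `F_v` across the ridge spanned by
    -- `{e_i : i ≠ k}`; its vertices are `{e_i : i ≠ k} ∪ {f_{φ(k)}}` and its corresponding
    -- dual vertex is `vk k ∈ V(Q*)`
    (φ : Fin n → Fin r) (vk : Fin n → (Fin n → ℝ))
    (hvkV : ∀ k, vk k ∈ VQd)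
    (hvke : ∀ k i, i ≠ k → vk k ⬝ᵥ e i = -1)
    (hvkf : ∀ k, vk k ⬝ᵥ f (φ k) = -1)
    (hvkAll : ∀ k, ∀ u ∈ VQ, vk k ⬝ᵥ u = -1 → (∃ i, i ≠ k ∧ u = e i) ∨ u = f (φ k)) :
    ∀ k, ∀ j, estar k ⬝ᵥ f j = if φ k = j then -(a (e k)) / a (f j) else 0 := by
  intro k j
  have hε0 : ε ≠ 0 := ne_zero_of_mem_epsSet ha hε.1
  have hoff : ∀ u ∈ VQ, ∀ w ∈ VQd, w ⬝ᵥ u ≠ -1 → 1 + w ⬝ᵥ u = ε / a u := fun u hu w hw =>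
    one_add_dotProduct_eq_div (ha u hu).ne' (hcond u hu w hw)
  have hv_f : 1 + v ⬝ᵥ f j = ε / a (f j) := hoff _ (hfV j) v hv fun h => by
    obtain ⟨i, hi⟩ := heAll _ (hfV j) h
    exact hef j i hi
  have hvk_e : 1 + vk k ⬝ᵥ e k = ε / a (e k) := hoff _ (heV k) _ (hvkV k) fun h =>
    (hvkAll k _ (heV k) h).elim (fun ⟨_, hik, hi⟩ => hik (he hi).symm)
      (fun hi => hef _ _ hi.symm)
  have hdiff := dotProduct_sub_dotProduct_of_adjacent_facets hestar heF (hvke k) (f j)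
  rw [hvk_e] at hdiff
  have hak := (ha _ (heV k)).ne'
  have haj := (ha _ (hfV j)).ne'
  split_ifs with hφ
  · subst hφ
    have hlink : ε / a (e k) * (estar k ⬝ᵥ f (φ k)) = -(ε / a (f (φ k))) := by
      linarith [hvkf k]
    field_simp at hlink
    rw [eq_div_iff haj, hlink]
  · have hvk_f : 1 + vk k ⬝ᵥ f j = ε / a (f j) := hoff _ (hfV j) _ (hvkV k) fun h =>
      (hvkAll k _ (hfV j) h).elim (fun ⟨i, _, hi⟩ => hef j i hi) (fun hi => hφ (hf hi).symm)
    have hzero : ε / a (e k) * (estar k ⬝ᵥ f j) = 0 := by linarith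
    exact (mul_eq_zero.mp hzero).resolve_left (div_ne_zero hε0 hak)

/-- Assume Condition (1'): `a(u)(1 + ⟨v,u⟩) ∈ {0, ε_Q}` for all `u ∈ V(Q)`,
`v ∈ V(Q*)`.  Fix `v ∈ V(Q*)`, let `e_1, …, e_n` be the vertices of `F_v` with dual basis
`(e_1*, …, e_n*)`, let `f_1, …, f_r` be the remaining vertices of `Q`, and for each `k` let
`F_k` be the facet adjacent to `F_v` across the ridge spanned by `{e_i : i ≠ k}`, with
vertices `{e_i : i ≠ k} ∪ {f_{φ(k)}}` and corresponding dual vertex `v_k ∈ V(Q*)`.  Then for all `k ∈ {1,…,n}`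
and `j ∈ {1,…,r}`: `⟨e_k*, f_j⟩ = -a(e_k)/a(f_j)` if `φ(k) = j`, and `⟨e_k*, f_j⟩ = 0`
otherwise. -/
theorem condition1'_dual_pairing_formula {n : ℕ} (hn : 1 ≤ n)
    (VQ VQd : Finset (Fin n → ℝ))
    -- `VQ` is the vertex set of the polytope `Q = conv(VQ)`
    (hVQ : (VQ : Set (Fin n → ℝ)) =
      Set.extremePoints ℝ (convexHull ℝ (VQ : Set (Fin n → ℝ))))
    -- `0` lies in the interior of `Q` (in particular `Q` is full-dimensional)
    (h0 : (0 : Fin n → ℝ) ∈ interior (convexHull ℝ (VQ : Set (Fin n → ℝ))))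
    -- `VQd` is the vertex set of the polar dual `Q*`
    (hVQd : (VQd : Set (Fin n → ℝ)) =
      Set.extremePoints ℝ (polarDual (convexHull ℝ (VQ : Set (Fin n → ℝ)))))
    -- `Q` is simplicial: every facet has exactly `n` vertices
    (hsimp : ∀ v ∈ VQd, (VQ.filter fun u => v ⬝ᵥ u = -1).card = n)
    -- the weight function `a : V(Q) → ℝ_{>0}`
    (a : (Fin n → ℝ) → ℝ) (ha : ∀ u ∈ VQ, 0 < a u)
    -- `ε` is the minimum `ε_Q`
    (ε : ℝ) (hε : IsLeast (epsSet VQ VQd a) ε)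
    -- Condition (1')
    (hcond : ∀ u ∈ VQ, ∀ v ∈ VQd, a u * (1 + v ⬝ᵥ u) = 0 ∨ a u * (1 + v ⬝ᵥ u) = ε)
    -- fix `v ∈ V(Q*)`; `e_1, …, e_n` are the vertices of the facet `F_v`
    (v : Fin n → ℝ) (hv : v ∈ VQd)
    (e : Fin n → (Fin n → ℝ)) (he : Function.Injective e)
    (heV : ∀ i, e i ∈ VQ) (heF : ∀ i, v ⬝ᵥ e i = -1)
    (heAll : ∀ u ∈ VQ, v ⬝ᵥ u = -1 → ∃ i, u = e i)
    -- `(e_1*, …, e_n*)` is the dual basis of `(e_1, …, e_n)`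
    (estar : Fin n → (Fin n → ℝ))
    (hestar : ∀ i k, estar i ⬝ᵥ e k = if i = k then 1 else 0)
    -- `f_1, …, f_r` are the remaining vertices of `Q`
    (r : ℕ) (f : Fin r → (Fin n → ℝ)) (hf : Function.Injective f)
    (hfV : ∀ j, f j ∈ VQ) (hef : ∀ j i, f j ≠ e i)
    (hVQef : (VQ : Set (Fin n → ℝ)) = Set.range e ∪ Set.range f)
    -- for each `k`, `F_k` is the facet of `Q` adjacent to `F_v` across the ridge spanned by
    -- `{e_i : i ≠ k}`; its vertices are `{e_i : i ≠ k} ∪ {f_{φ(k)}}` and its corresponding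
    -- dual vertex is `vk k ∈ V(Q*)`
    (φ : Fin n → Fin r) (vk : Fin n → (Fin n → ℝ))
    (hvkV : ∀ k, vk k ∈ VQd) (hvkne : ∀ k, vk k ≠ v)
    (hvke : ∀ k i, i ≠ k → vk k ⬝ᵥ e i = -1)
    (hvkf : ∀ k, vk k ⬝ᵥ f (φ k) = -1)
    (hvkAll : ∀ k, ∀ u ∈ VQ, vk k ⬝ᵥ u = -1 → (∃ i, i ≠ k ∧ u = e i) ∨ u = f (φ k)) :
    ∀ k, ∀ j, estar k ⬝ᵥ f j = if φ k = j then -(a (e k)) / a (f j) else 0 :=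
  condition1'_dual_pairing_formula_general VQ VQd a ha ε hε hcond v hv e he heV heF heAll estar
    hestar r f hf hfV hef φ vk hvkV hvke hvkf hvkAll
end

section
/- Let Q ⊂ ℝ^n be a full-dimensional simplicial convex polytope with 0 in its interior, with weight function a : V(Q) → ℝ_{>0}, satisfying Condition (1'): for every u ∈ V(Q) and v ∈ V(Q*), a(u)(1+⟨v,u⟩) equals either 0 or ε_Q. With the notation of Condition (1') below, one has for every j ∈ {1,…,r}: a(f_j)·f_j + Σ_{k ∈ φ^{−1}(j)} a(e_k)·e_k = 0. In particular, the map φ : {1,…,n} → {1,…,r} is surjective. -/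
open Matrix

/-! Condition (1') says that `a(u)(1 + ⟨w,u⟩) = ε` for every vertex `u` off the facet `F_w`.
For the facet `F_k` adjacent to `F_v`, the dual vertices differ by `v_k - v = c_k • e_k*`, and
evaluating at `e_k` gives `a(e_k) c_k = ε`. Evaluating at `f_j` then gives the coordinates
`a(f_j) ⟨e_k*, f_j⟩ = -a(e_k)` if `φ k = j` and `0` otherwise, which is the relation. If `φ` missed
`j`, the relation would force `f_j = 0`, a vertex in the interior of `Q`. -/

section DualFamily

variable {ι R : Type*} [Fintype ι] [DecidableEq ι] [CommRing R] {e s : ι → ι → R}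

theorem transpose_mul_eq_one_of_dotProduct_eq_ite
    (hd : ∀ i k, s i ⬝ᵥ e k = if i = k then 1 else 0) : (of e)ᵀ * of s = 1 := by
  refine mul_eq_one_comm.mp (Matrix.ext fun i k => ?_)
  simpa [Matrix.mul_apply, dotProduct, Matrix.one_apply] using hd i k

theorem sum_dotProduct_smul_eq_of_dotProduct_eq_ite
    (hd : ∀ i k, s i ⬝ᵥ e k = if i = k then 1 else 0) (x : ι → R) :
    ∑ i, (s i ⬝ᵥ x) • e i = x := by
  calc ∑ i, (s i ⬝ᵥ x) • e i = x ᵥ* ((of e)ᵀ * of s)ᵀ := by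
        rw [transpose_mul, ← vecMul_vecMul, vecMul_eq_sum, vecMul_transpose]
        simp only [mulVec, dotProduct_comm]; rfl
    _ = x := by rw [transpose_mul_eq_one_of_dotProduct_eq_ite hd, transpose_one, vecMul_one]

theorem sum_smul_dotProduct_eq_of_dotProduct_eq_ite
    (hd : ∀ i k, s i ⬝ᵥ e k = if i = k then 1 else 0) (w : ι → R) :
    ∑ i, (w ⬝ᵥ e i) • s i = w := by
  calc ∑ i, (w ⬝ᵥ e i) • s i = w ᵥ* ((of e)ᵀ * of s) := by
        rw [← vecMul_vecMul, vecMul_eq_sum, vecMul_transpose]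
        simp only [mulVec, dotProduct_comm]; rfl
    _ = w := by rw [transpose_mul_eq_one_of_dotProduct_eq_ite hd, vecMul_one]

theorem sub_eq_smul_of_dotProduct_eq_of_ne
    (hd : ∀ i k, s i ⬝ᵥ e k = if i = k then 1 else 0) {v w : ι → R} {k : ι}
    (hvw : ∀ i, i ≠ k → w ⬝ᵥ e i = v ⬝ᵥ e i) : w - v = ((w - v) ⬝ᵥ e k) • s k := by
  conv_lhs => rw [← sum_smul_dotProduct_eq_of_dotProduct_eq_ite hd (w - v)]
  refine Finset.sum_eq_single k (fun i _ hik => ?_) (by simp)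
  rw [sub_dotProduct, hvw i hik, sub_self, zero_smul]

theorem add_sum_filter_smul_eq_zero_of_dotProduct_eq_ite
    (hd : ∀ i k, s i ⬝ᵥ e k = if i = k then 1 else 0) {p : ι → Prop} [DecidablePred p]
    {b x : ι → R} (hx : ∀ k, s k ⬝ᵥ x = if p k then -b k else 0) :
    x + ∑ k ∈ Finset.univ.filter p, b k • e k = 0 := by
  rw [← sum_dotProduct_smul_eq_of_dotProduct_eq_ite hd x]
  simp only [hx, Finset.sum_filter, ← Finset.sum_add_distrib]
  exact Finset.sum_eq_zero fun k _ => by split_ifs <;> simp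

end DualFamily

section WeightCondition

variable {n : ℕ} {VQ VQd : Finset (Fin n → ℝ)} {a : (Fin n → ℝ) → ℝ} {ε : ℝ}

theorem polarDual_anti {s t : Set (Fin n → ℝ)} (h : s ⊆ t) : polarDual t ⊆ polarDual s :=
  fun _ hw u hu => hw u (h hu)

theorem mul_one_add_dotProduct_eq_ite (hdual : ∀ w ∈ VQd, w ∈ polarDual (VQ : Set (Fin n → ℝ)))
    (ha : ∀ u ∈ VQ, 0 < a u)
    (hcond : ∀ u ∈ VQ, ∀ v ∈ VQd, a u * (1 + v ⬝ᵥ u) = 0 ∨ a u * (1 + v ⬝ᵥ u) = ε)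
    {u w : Fin n → ℝ} (hu : u ∈ VQ) (hw : w ∈ VQd) :
    a u * (1 + w ⬝ᵥ u) = if w ⬝ᵥ u = -1 then 0 else ε := by
  split_ifs with h
  · rw [h, add_neg_cancel, mul_zero]
  · have hpos : 0 < 1 + w ⬝ᵥ u := by
      linarith [lt_of_le_of_ne (hdual w hw u hu) (Ne.symm h)]
    exact (hcond u hu w hw).resolve_left (mul_pos (ha u hu) hpos).ne'

/-- `F_v` and `F_w` are adjacent facets and `u'` is the vertex of `F_v` off `F_w`. -/
theorem mul_dotProduct_eq_ite_of_sub_eq_smul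
    (hdual : ∀ w ∈ VQd, w ∈ polarDual (VQ : Set (Fin n → ℝ)))
    (ha : ∀ u ∈ VQ, 0 < a u)
    (hcond : ∀ u ∈ VQ, ∀ v ∈ VQd, a u * (1 + v ⬝ᵥ u) = 0 ∨ a u * (1 + v ⬝ᵥ u) = ε)
    {v w s u' u : Fin n → ℝ} {d : ℝ} (hv : v ∈ VQd) (hw : w ∈ VQd) (hwv : w - v = d • s)
    (hu' : u' ∈ VQ) (hvu' : v ⬝ᵥ u' = -1) (hwu' : w ⬝ᵥ u' ≠ -1) (hsu' : s ⬝ᵥ u' = 1)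
    (hu : u ∈ VQ) (hvu : v ⬝ᵥ u ≠ -1) :
    a u * (s ⬝ᵥ u) = if w ⬝ᵥ u = -1 then -a u' else 0 := by
  have hw_apply : ∀ x, w ⬝ᵥ x = v ⬝ᵥ x + d * (s ⬝ᵥ x) := fun x => by
    rw [← sub_add_cancel w v, hwv, add_dotProduct, smul_dotProduct, smul_eq_mul, add_comm]
  have hd : d ≠ 0 := fun hd => hwu' (by rw [hw_apply, hd, zero_mul, add_zero, hvu'])
  have hu'w := mul_one_add_dotProduct_eq_ite hdual ha hcond hu' hw
  have huv := mul_one_add_dotProduct_eq_ite hdual ha hcond hu hv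
  have huw := mul_one_add_dotProduct_eq_ite hdual ha hcond hu hw
  rw [if_neg hwu', hw_apply, hvu', hsu'] at hu'w
  rw [if_neg hvu] at huv
  refine mul_left_cancel₀ hd ?_
  split_ifs at huw ⊢ with h
  · rw [hw_apply] at huw
    linear_combination huw - huv + hu'w
  · rw [hw_apply] at huw
    linear_combination huw - huv

end WeightCondition

theorem condition1'_relation_and_surjective_general {n : ℕ} (hn : 1 ≤ n)
    (VQ VQd : Finset (Fin n → ℝ))
    -- `VQ` is the vertex set of the polytope `Q = conv(VQ)`
    (hVQ : (VQ : Set (Fin n → ℝ)) =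
      Set.extremePoints ℝ (convexHull ℝ (VQ : Set (Fin n → ℝ))))
    -- `0` lies in the interior of `Q` (in particular `Q` is full-dimensional)
    (h0 : (0 : Fin n → ℝ) ∈ interior (convexHull ℝ (VQ : Set (Fin n → ℝ))))
    -- `VQd` is the vertex set of the polar dual `Q*`
    (hVQd : (VQd : Set (Fin n → ℝ)) =
      Set.extremePoints ℝ (polarDual (convexHull ℝ (VQ : Set (Fin n → ℝ)))))
    -- the weight function `a : V(Q) → ℝ_{>0}`
    (a : (Fin n → ℝ) → ℝ) (ha : ∀ u ∈ VQ, 0 < a u)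
    (ε : ℝ)
    -- Condition (1')
    (hcond : ∀ u ∈ VQ, ∀ v ∈ VQd, a u * (1 + v ⬝ᵥ u) = 0 ∨ a u * (1 + v ⬝ᵥ u) = ε)
    -- fix `v ∈ V(Q*)`; `e_1, …, e_n` are the vertices of the facet `F_v`
    (v : Fin n → ℝ) (hv : v ∈ VQd)
    (e : Fin n → (Fin n → ℝ)) (he : Function.Injective e)
    (heV : ∀ i, e i ∈ VQ) (heF : ∀ i, v ⬝ᵥ e i = -1)
    (heAll : ∀ u ∈ VQ, v ⬝ᵥ u = -1 → ∃ i, u = e i)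
    -- `(e_1*, …, e_n*)` is the dual basis of `(e_1, …, e_n)`
    (estar : Fin n → (Fin n → ℝ))
    (hestar : ∀ i k, estar i ⬝ᵥ e k = if i = k then 1 else 0)
    -- `f_1, …, f_r` are the remaining vertices of `Q`
    (r : ℕ) (f : Fin r → (Fin n → ℝ)) (hf : Function.Injective f)
    (hfV : ∀ j, f j ∈ VQ) (hef : ∀ j i, f j ≠ e i)
    -- for each `k`, `F_k` is the facet of `Q` adjacent to `F_v` across the ridge spanned by
    -- `{e_i : i ≠ k}`; its vertices are `{e_i : i ≠ k} ∪ {f_{φ(k)}}` and its corresponding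
    -- dual vertex is `vk k ∈ V(Q*)`
    (φ : Fin n → Fin r) (vk : Fin n → (Fin n → ℝ))
    (hvkV : ∀ k, vk k ∈ VQd)
    (hvke : ∀ k i, i ≠ k → vk k ⬝ᵥ e i = -1)
    (hvkf : ∀ k, vk k ⬝ᵥ f (φ k) = -1)
    (hvkAll : ∀ k, ∀ u ∈ VQ, vk k ⬝ᵥ u = -1 → (∃ i, i ≠ k ∧ u = e i) ∨ u = f (φ k)) :
    (∀ j : Fin r,
      a (f j) • f j + ∑ k ∈ Finset.univ.filter (fun k => φ k = j), a (e k) • e k = 0) ∧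
    Function.Surjective φ := by
  have hdual : ∀ w ∈ VQd, w ∈ polarDual (VQ : Set (Fin n → ℝ)) := fun w hw =>
    polarDual_anti (subset_convexHull ℝ _) (hVQd.le hw).1
  have hvf : ∀ j, v ⬝ᵥ f j ≠ -1 := fun j h => by
    obtain ⟨i, hi⟩ := heAll _ (hfV j) h
    exact hef j i hi
  have hvke_self : ∀ k, vk k ⬝ᵥ e k ≠ -1 := fun k h => by
    rcases hvkAll k _ (heV k) h with ⟨i, hik, hi⟩ | hk
    · exact hik (he hi).symm
    · exact hef _ k hk.symm
  have hvkf_iff : ∀ k j, vk k ⬝ᵥ f j = -1 ↔ φ k = j := fun k j => by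
    refine ⟨fun h => ?_, fun h => h ▸ hvkf k⟩
    rcases hvkAll k _ (hfV j) h with ⟨i, -, hi⟩ | hj
    · exact absurd hi (hef j i)
    · exact (hf hj).symm
  have hcoord : ∀ k j, a (f j) * (estar k ⬝ᵥ f j) = if φ k = j then -a (e k) else 0 := by
    intro k j
    rw [← if_congr (hvkf_iff k j) rfl rfl]
    refine mul_dotProduct_eq_ite_of_sub_eq_smul hdual ha hcond hv (hvkV k)
      (sub_eq_smul_of_dotProduct_eq_of_ne hestar fun i hi => ?_) (heV k) (heF k)
      (hvke_self k) (by simp [hestar]) (hfV j) (hvf j)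
    rw [hvke k i hi, heF i]
  have hrel : ∀ j : Fin r,
      a (f j) • f j + ∑ k ∈ Finset.univ.filter (fun k => φ k = j), a (e k) • e k = 0 :=
    fun j => add_sum_filter_smul_eq_zero_of_dotProduct_eq_ite hestar fun k => by
      rw [dotProduct_smul, smul_eq_mul, hcoord]
  refine ⟨hrel, fun j => ?_⟩
  by_contra! hj
  have hfj : f j = 0 := by
    simpa [hj, (ha _ (hfV j)).ne'] using hrel j
  have : Nonempty (Fin n) := ⟨⟨0, hn⟩⟩
  refine Set.disjoint_left.mp (disjoint_interior_extremePoints _) h0 ?_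
  rw [← hVQ, ← hfj]
  exact hfV j

/-- Assume Condition (1'): `a(u)(1 + ⟨v,u⟩) ∈ {0, ε_Q}` for all `u ∈ V(Q)`,
`v ∈ V(Q*)`.  Fix `v ∈ V(Q*)`, let `e_1, …, e_n` be the vertices of `F_v` with dual basis
`(e_1*, …, e_n*)`, let `f_1, …, f_r` be the remaining vertices of `Q`, and for each `k` let
`F_k` be the facet adjacent to `F_v` across the ridge spanned by `{e_i : i ≠ k}`, with
vertices `{e_i : i ≠ k} ∪ {f_{φ(k)}}` and corresponding dual vertex `v_k ∈ V(Q*)`.  Then for every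
`j ∈ {1,…,r}`: `a(f_j)·f_j + Σ_{k ∈ φ⁻¹(j)} a(e_k)·e_k = 0`; in particular `φ` is
surjective. -/
theorem condition1'_relation_and_surjective {n : ℕ} (hn : 1 ≤ n)
    (VQ VQd : Finset (Fin n → ℝ))
    -- `VQ` is the vertex set of the polytope `Q = conv(VQ)`
    (hVQ : (VQ : Set (Fin n → ℝ)) =
      Set.extremePoints ℝ (convexHull ℝ (VQ : Set (Fin n → ℝ))))
    -- `0` lies in the interior of `Q` (in particular `Q` is full-dimensional)
    (h0 : (0 : Fin n → ℝ) ∈ interior (convexHull ℝ (VQ : Set (Fin n → ℝ))))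
    -- `VQd` is the vertex set of the polar dual `Q*`
    (hVQd : (VQd : Set (Fin n → ℝ)) =
      Set.extremePoints ℝ (polarDual (convexHull ℝ (VQ : Set (Fin n → ℝ)))))
    -- `Q` is simplicial: every facet has exactly `n` vertices
    (hsimp : ∀ v ∈ VQd, (VQ.filter fun u => v ⬝ᵥ u = -1).card = n)
    -- the weight function `a : V(Q) → ℝ_{>0}`
    (a : (Fin n → ℝ) → ℝ) (ha : ∀ u ∈ VQ, 0 < a u)
    -- `ε` is the minimum `ε_Q`
    (ε : ℝ) (hε : IsLeast (epsSet VQ VQd a) ε)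
    -- Condition (1')
    (hcond : ∀ u ∈ VQ, ∀ v ∈ VQd, a u * (1 + v ⬝ᵥ u) = 0 ∨ a u * (1 + v ⬝ᵥ u) = ε)
    -- fix `v ∈ V(Q*)`; `e_1, …, e_n` are the vertices of the facet `F_v`
    (v : Fin n → ℝ) (hv : v ∈ VQd)
    (e : Fin n → (Fin n → ℝ)) (he : Function.Injective e)
    (heV : ∀ i, e i ∈ VQ) (heF : ∀ i, v ⬝ᵥ e i = -1)
    (heAll : ∀ u ∈ VQ, v ⬝ᵥ u = -1 → ∃ i, u = e i)
    -- `(e_1*, …, e_n*)` is the dual basis of `(e_1, …, e_n)`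
    (estar : Fin n → (Fin n → ℝ))
    (hestar : ∀ i k, estar i ⬝ᵥ e k = if i = k then 1 else 0)
    -- `f_1, …, f_r` are the remaining vertices of `Q`
    (r : ℕ) (f : Fin r → (Fin n → ℝ)) (hf : Function.Injective f)
    (hfV : ∀ j, f j ∈ VQ) (hef : ∀ j i, f j ≠ e i)
    (hVQef : (VQ : Set (Fin n → ℝ)) = Set.range e ∪ Set.range f)
    -- for each `k`, `F_k` is the facet of `Q` adjacent to `F_v` across the ridge spanned by
    -- `{e_i : i ≠ k}`; its vertices are `{e_i : i ≠ k} ∪ {f_{φ(k)}}` and its corresponding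
    -- dual vertex is `vk k ∈ V(Q*)`
    (φ : Fin n → Fin r) (vk : Fin n → (Fin n → ℝ))
    (hvkV : ∀ k, vk k ∈ VQd) (hvkne : ∀ k, vk k ≠ v)
    (hvke : ∀ k i, i ≠ k → vk k ⬝ᵥ e i = -1)
    (hvkf : ∀ k, vk k ⬝ᵥ f (φ k) = -1)
    (hvkAll : ∀ k, ∀ u ∈ VQ, vk k ⬝ᵥ u = -1 → (∃ i, i ≠ k ∧ u = e i) ∨ u = f (φ k)) :
    (∀ j : Fin r,
      a (f j) • f j + ∑ k ∈ Finset.univ.filter (fun k => φ k = j), a (e k) • e k = 0) ∧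
    Function.Surjective φ :=
  condition1'_relation_and_surjective_general hn VQ VQd hVQ h0 hVQd a ha ε hcond v hv e he heV heF
    heAll estar hestar r f hf hfV hef φ vk hvkV hvke hvkf hvkAll
end
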